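/- (2-soliton example: translational bispectrality.) Define ψ(x,z) = (1 − (6 + (3z − 2)e^{2x} + 2z − z·e^{−2x})/((e^{x} + e^{−x})² z²))·e^{x z}, and q(z) = z⁴ − 2z³ − z² + 2z = z(z−1)(z+1)(z−2). Define polynomials p_{−3}(z) = 20z + 11z² − 8z³ + z⁴, p_{5}(z) = 60 − 68z − z² + 8z³ + z⁴, p_{−1}(z) = −36 + 24z + 16z² − 16z³ + 4z⁴, p_{3}(z) = −44 − 88z − 8z² + 16z³ + 4z⁴, p_{1}(z) = −12 − 16z − 2z² + 6z⁴. Then for all real x and all z ∈ ℂ with z ≠ 0 and z + μ ∉ {0, 1, −1, 2} for every μ ∈ {−3, 5, −1, 3, 1}: z^{−2} · ∑_{μ ∈ {−3,5,−1,3,1}} p_{μ}(z) · ((z+μ)² / q(z+μ)) · ψ(x, z+μ) = e^{−3x}·(1 + e^{2x})⁴ · ψ(x, z). -/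

import Mathlib

private lemma qfac (w : ℂ) (h0 : w ≠ 0) (h1 : w ≠ 1) (h2 : w ≠ -1) (h3 : w ≠ 2) :
    w ^ 4 - 2 * w ^ 3 - w ^ 2 + 2 * w ≠ 0 := by
  have : w ^ 4 - 2 * w ^ 3 - w ^ 2 + 2 * w = w * (w - 1) * (w + 1) * (w - 2) := by ring
  rw [this]
  exact mul_ne_zero (mul_ne_zero (mul_ne_zero h0 (sub_ne_zero.mpr h1))
    (by simpa [sub_neg_eq_add] using sub_ne_zero.mpr h2)) (sub_ne_zero.mpr h3)

private lemma auxInv (a b c d e g v : ℂ) (hc : c ≠ 0) (he : e ≠ 0) (hg : g ≠ 0) :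
    a * (b / c) * (d / e * (v * g⁻¹)) = v * (a * b * d) / (c * e * g) := by
  field_simp

private lemma auxMul (a b c d e g v : ℂ) (hc : c ≠ 0) (he : e ≠ 0) :
    a * (b / c) * (d / e * (v * g)) = v * (a * b * d * g) / (c * e) := by
  field_simp

private lemma auxR (c d e g v : ℂ) (he : e ≠ 0) (hg : g ≠ 0) :
    g⁻¹ * c * (d / e * v) = v * (c * d) / (e * g) := by
  field_simp

set_option maxHeartbeats 8000000 in
/-- 2-soliton example, translational bispectrality: the 2-soliton wave
function `ψ` satisfies `Λ̂ψ = e^{−3x}(1 + e^{2x})⁴ ψ`, where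
`Λ̂ = z⁻² ∘ (∑_μ p_μ(z) S_μ) ∘ (z²/q(z))` is a translational-differential operator in
the spectral variable `z`, with shifts `μ ∈ {−3, 5, −1, 3, 1}` and
`q(z) = z⁴ − 2z³ − z² + 2z = z(z−1)(z+1)(z−2)`. -/
theorem two_soliton_translational_bispectrality
    (ψ : ℝ → ℂ → ℂ)
    (hψ : ∀ (x : ℝ) (z : ℂ), ψ x z =
        (1 - (6 + (3 * z - 2) * Complex.exp (2 * (x : ℂ)) + 2 * z
                - z * Complex.exp (-2 * (x : ℂ)))
            / ((Complex.exp (x : ℂ) + Complex.exp (-(x : ℂ))) ^ 2 * z ^ 2))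
          * Complex.exp ((x : ℂ) * z))
    (q : ℂ → ℂ) (hq : ∀ z, q z = z ^ 4 - 2 * z ^ 3 - z ^ 2 + 2 * z)
    (μ : Fin 5 → ℂ) (hμ : μ = ![-3, 5, -1, 3, 1])
    (p : Fin 5 → ℂ → ℂ)
    (hp : ∀ z : ℂ,
      p 0 z = 20 * z + 11 * z ^ 2 - 8 * z ^ 3 + z ^ 4 ∧
      p 1 z = 60 - 68 * z - z ^ 2 + 8 * z ^ 3 + z ^ 4 ∧
      p 2 z = -36 + 24 * z + 16 * z ^ 2 - 16 * z ^ 3 + 4 * z ^ 4 ∧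
      p 3 z = -44 - 88 * z - 8 * z ^ 2 + 16 * z ^ 3 + 4 * z ^ 4 ∧
      p 4 z = -12 - 16 * z - 2 * z ^ 2 + 6 * z ^ 4) :
    ∀ (x : ℝ) (z : ℂ), z ≠ 0 →
      (∀ j : Fin 5, z + μ j ≠ 0 ∧ z + μ j ≠ 1 ∧ z + μ j ≠ -1 ∧ z + μ j ≠ 2) →
      (z ^ 2)⁻¹ * ∑ j : Fin 5, p j z * ((z + μ j) ^ 2 / q (z + μ j)) * ψ x (z + μ j)
        = Complex.exp (-3 * (x : ℂ)) * (1 + Complex.exp (2 * (x : ℂ))) ^ 4 * ψ x z := by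
  intro x z hz hall
  have h0 := hall 0
  have h1 := hall 1
  have h2 := hall 2
  have h3 := hall 3
  have h4 := hall 4
  rw [hμ] at h0 h1 h2 h3 h4 ⊢
  simp only [Matrix.cons_val_zero, Matrix.cons_val_one, Matrix.head_cons,
    Matrix.cons_val_two, Matrix.tail_cons, Matrix.cons_val_three, Matrix.cons_val_four,
    Matrix.cons_val_fin_one] at h0 h1 h2 h3 h4
  obtain ⟨h0a, h0b, h0c, h0d⟩ := h0
  obtain ⟨h1a, h1b, h1c, h1d⟩ := h1
  obtain ⟨h2a, h2b, h2c, h2d⟩ := h2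
  obtain ⟨h3a, h3b, h3c, h3d⟩ := h3
  obtain ⟨h4a, h4b, h4c, h4d⟩ := h4
  obtain ⟨hp0, hp1, hp2, hp3, hp4⟩ := hp z
  -- notation
  set E : ℂ := Complex.exp (x : ℂ) with hE
  set W : ℂ := Complex.exp ((x : ℂ) * z) with hW
  have hEne : E ≠ 0 := Complex.exp_ne_zero _
  have hWne : W ≠ 0 := Complex.exp_ne_zero _
  have hE21 : E ^ 2 + 1 ≠ 0 := by
    have hEr : E = ((Real.exp x : ℝ) : ℂ) := by rw [hE, Complex.ofReal_exp]
    rw [hEr]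
    have : ((Real.exp x : ℝ) : ℂ) ^ 2 + 1 = (((Real.exp x) ^ 2 + 1 : ℝ) : ℂ) := by
      push_cast; ring
    rw [this]
    exact_mod_cast ne_of_gt (by positivity : (0:ℝ) < (Real.exp x) ^ 2 + 1)
  have hpow : ∀ n : ℕ, Complex.exp ((x : ℂ) * n) = E ^ n := by
    intro n; rw [mul_comm, Complex.exp_nat_mul, hE]
  have e2 : Complex.exp (2 * (x : ℂ)) = E ^ 2 := by
    rw [show (2 : ℂ) * x = (x : ℂ) * (2 : ℕ) by push_cast; ring, hpow]
  have em2 : Complex.exp (-2 * (x : ℂ)) = (E ^ 2)⁻¹ := by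
    rw [show (-2 : ℂ) * x = -((x : ℂ) * (2 : ℕ)) by push_cast; ring, Complex.exp_neg, hpow]
  have em1 : Complex.exp (-(x : ℂ)) = E⁻¹ := by rw [Complex.exp_neg, hE]
  have em3 : Complex.exp (-3 * (x : ℂ)) = (E ^ 3)⁻¹ := by
    rw [show (-3 : ℂ) * x = -((x : ℂ) * (3 : ℕ)) by push_cast; ring, Complex.exp_neg, hpow]
  have hsh : ∀ c : ℂ, Complex.exp ((x : ℂ) * (z + c)) = W * Complex.exp ((x : ℂ) * c) := by
    intro c; rw [mul_add, Complex.exp_add, hW]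
  have sm3 : Complex.exp ((x : ℂ) * (z + -3)) = W * (E ^ 3)⁻¹ := by
    rw [hsh, show (x : ℂ) * (-3) = -((x : ℂ) * (3 : ℕ)) by push_cast; ring,
      Complex.exp_neg, hpow]
  have s5 : Complex.exp ((x : ℂ) * (z + 5)) = W * E ^ 5 := by
    rw [hsh, show (x : ℂ) * (5 : ℂ) = (x : ℂ) * (5 : ℕ) by norm_num, hpow]
  have sm1 : Complex.exp ((x : ℂ) * (z + -1)) = W * E⁻¹ := by
    rw [hsh, show (x : ℂ) * (-1) = -(x : ℂ) by ring, Complex.exp_neg, hE]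
  have s3 : Complex.exp ((x : ℂ) * (z + 3)) = W * E ^ 3 := by
    rw [hsh, show (x : ℂ) * (3 : ℂ) = (x : ℂ) * (3 : ℕ) by norm_num, hpow]
  have s1 : Complex.exp ((x : ℂ) * (z + 1)) = W * E := by
    rw [hsh, mul_one, hE]
  -- nonvanishing of linear factors
  have f1 : z - 3 ≠ 0 := fun h => h0a (by linear_combination h)
  have f2 : z - 4 ≠ 0 := fun h => h0b (by linear_combination h)
  have f3 : z - 2 ≠ 0 := fun h => h0c (by linear_combination h)
  have f4 : z - 5 ≠ 0 := fun h => h0d (by linear_combination h)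
  have f5 : z + 5 ≠ 0 := h1a
  have f6 : z + 4 ≠ 0 := fun h => h1b (by linear_combination h)
  have f7 : z + 6 ≠ 0 := fun h => h1c (by linear_combination h)
  have f8 : z + 3 ≠ 0 := fun h => h1d (by linear_combination h)
  have f9 : z - 1 ≠ 0 := h2a
  have f10 : z + 1 ≠ 0 := h4a
  have f11 : z + 2 ≠ 0 := fun h => h3b (by linear_combination h)
  rw [Fin.sum_univ_five]
  simp only [Matrix.cons_val_zero, Matrix.cons_val_one, Matrix.head_cons,
    Matrix.cons_val_two, Matrix.tail_cons, Matrix.cons_val_three, Matrix.cons_val_four]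
  rw [hψ x z, hψ x (z + -3), hψ x (z + 5), hψ x (z + -1), hψ x (z + 3), hψ x (z + 1),
    hq, hq, hq, hq, hq, hp0, hp1, hp2, hp3, hp4,
    e2, em2, em1, em3, sm3, s5, sm1, s3, s1]
  rw [show (z + -3) ^ 4 - 2 * (z + -3) ^ 3 - (z + -3) ^ 2 + 2 * (z + -3)
      = (z - 3) * (z - 4) * (z - 2) * (z - 5) by ring,
    show (z + 5) ^ 4 - 2 * (z + 5) ^ 3 - (z + 5) ^ 2 + 2 * (z + 5)
      = (z + 5) * (z + 4) * (z + 6) * (z + 3) by ring,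
    show (z + -1) ^ 4 - 2 * (z + -1) ^ 3 - (z + -1) ^ 2 + 2 * (z + -1)
      = (z - 1) * (z - 2) * z * (z - 3) by ring,
    show (z + 3) ^ 4 - 2 * (z + 3) ^ 3 - (z + 3) ^ 2 + 2 * (z + 3)
      = (z + 3) * (z + 2) * (z + 4) * (z + 1) by ring,
    show (z + 1) ^ 4 - 2 * (z + 1) ^ 3 - (z + 1) ^ 2 + 2 * (z + 1)
      = (z + 1) * z * (z + 2) * (z - 1) by ring]
  have hpsi : ∀ w : ℂ, w ≠ 0 →
      1 - (6 + (3 * w - 2) * E ^ 2 + 2 * w - w * (E ^ 2)⁻¹) / ((E + E⁻¹) ^ 2 * w ^ 2)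
      = ((E ^ 2 + 1) ^ 2 * w ^ 2 - (6 * E ^ 2 + (3 * w - 2) * E ^ 4 + 2 * w * E ^ 2 - w))
        / ((E ^ 2 + 1) ^ 2 * w ^ 2) := by
    intro w hw
    have hd : (E ^ 2 + 1) ^ 2 * w ^ 2 ≠ 0 :=
      mul_ne_zero (pow_ne_zero _ hE21) (pow_ne_zero _ hw)
    have h1 : (E + E⁻¹) ^ 2 * w ^ 2 = (E ^ 2 + 1) ^ 2 * w ^ 2 / E ^ 2 := by
      field_simp
    rw [h1, div_div_eq_mul_div, eq_div_iff hd, sub_mul, one_mul, div_mul_eq_mul_div,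
      mul_div_assoc, div_self hd, mul_one]
    field_simp
  rw [hpsi z hz, hpsi _ h0a, hpsi _ h1a, hpsi _ h2a, hpsi _ h3a, hpsi _ h4a]
  rw [← hW]
  have hg3 : E ^ 3 ≠ 0 := pow_ne_zero _ hEne
  have hg1 : E ≠ 0 := hEne
  have hP : (z - 5) * (z - 4) * (z - 3) * (z - 2) * (z - 1) * z * (z + 1) * (z + 2) * (z + 3) * (z + 4) * (z + 5) * (z + 6) ≠ 0 := (mul_ne_zero (mul_ne_zero (mul_ne_zero (mul_ne_zero (mul_ne_zero (mul_ne_zero (mul_ne_zero (mul_ne_zero (mul_ne_zero (mul_ne_zero (mul_ne_zero f4 f2) f1) f3) f9) hz) f10) f11) f8) f6) f5) f7)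
  have hD : E ^ 5 * (E ^ 2 + 1) ^ 2 * ((z - 5) * (z - 4) * (z - 3) * (z - 2) * (z - 1) * z * (z + 1) * (z + 2) * (z + 3) * (z + 4) * (z + 5) * (z + 6)) ≠ 0 := mul_ne_zero (mul_ne_zero (pow_ne_zero 5 hEne) (pow_ne_zero 2 hE21)) hP
  have hc0 : (z - 3) * (z - 4) * (z - 2) * (z - 5) ≠ 0 := (mul_ne_zero (mul_ne_zero (mul_ne_zero f1 f2) f3) f4)
  have he0 : (E ^ 2 + 1) ^ 2 * (z + -3) ^ 2 ≠ 0 := mul_ne_zero (pow_ne_zero _ hE21) (pow_ne_zero _ h0a)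
  have hDj0 : (z - 3) * (z - 4) * (z - 2) * (z - 5) * ((E ^ 2 + 1) ^ 2 * (z + -3) ^ 2) * E ^ 3 ≠ 0 := mul_ne_zero (mul_ne_zero hc0 he0) hg3
  have hc1 : (z + 5) * (z + 4) * (z + 6) * (z + 3) ≠ 0 := (mul_ne_zero (mul_ne_zero (mul_ne_zero f5 f6) f7) f8)
  have he1 : (E ^ 2 + 1) ^ 2 * (z + 5) ^ 2 ≠ 0 := mul_ne_zero (pow_ne_zero _ hE21) (pow_ne_zero _ h1a)
  have hDj1 : (z + 5) * (z + 4) * (z + 6) * (z + 3) * ((E ^ 2 + 1) ^ 2 * (z + 5) ^ 2) ≠ 0 := mul_ne_zero hc1 he1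
  have hc2 : (z - 1) * (z - 2) * z * (z - 3) ≠ 0 := (mul_ne_zero (mul_ne_zero (mul_ne_zero f9 f3) hz) f1)
  have he2 : (E ^ 2 + 1) ^ 2 * (z + -1) ^ 2 ≠ 0 := mul_ne_zero (pow_ne_zero _ hE21) (pow_ne_zero _ h2a)
  have hDj2 : (z - 1) * (z - 2) * z * (z - 3) * ((E ^ 2 + 1) ^ 2 * (z + -1) ^ 2) * E ≠ 0 := mul_ne_zero (mul_ne_zero hc2 he2) hg1
  have hc3 : (z + 3) * (z + 2) * (z + 4) * (z + 1) ≠ 0 := (mul_ne_zero (mul_ne_zero (mul_ne_zero f8 f11) f6) f10)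
  have he3 : (E ^ 2 + 1) ^ 2 * (z + 3) ^ 2 ≠ 0 := mul_ne_zero (pow_ne_zero _ hE21) (pow_ne_zero _ h3a)
  have hDj3 : (z + 3) * (z + 2) * (z + 4) * (z + 1) * ((E ^ 2 + 1) ^ 2 * (z + 3) ^ 2) ≠ 0 := mul_ne_zero hc3 he3
  have hc4 : (z + 1) * z * (z + 2) * (z - 1) ≠ 0 := (mul_ne_zero (mul_ne_zero (mul_ne_zero f10 hz) f11) f9)
  have he4 : (E ^ 2 + 1) ^ 2 * (z + 1) ^ 2 ≠ 0 := mul_ne_zero (pow_ne_zero _ hE21) (pow_ne_zero _ h4a)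
  have hDj4 : (z + 1) * z * (z + 2) * (z - 1) * ((E ^ 2 + 1) ^ 2 * (z + 1) ^ 2) ≠ 0 := mul_ne_zero hc4 he4
  have t0 : (20 * z + 11 * z ^ 2 - 8 * z ^ 3 + z ^ 4) * ((z + -3) ^ 2 / ((z - 3) * (z - 4) * (z - 2) * (z - 5))) * (((E ^ 2 + 1) ^ 2 * (z + -3) ^ 2 - (6 * E ^ 2 + (3 * (z + -3) - 2) * E ^ 4 + 2 * (z + -3) * E ^ 2 - (z + -3))) / ((E ^ 2 + 1) ^ 2 * (z + -3) ^ 2) * (W * (E ^ 3)⁻¹))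
      = W * ((20 * z + 11 * z ^ 2 - 8 * z ^ 3 + z ^ 4) * ((E ^ 2 + 1) ^ 2 * (z + -3) ^ 2 - (6 * E ^ 2 + (3 * (z + -3) - 2) * E ^ 4 + 2 * (z + -3) * E ^ 2 - (z + -3))) * E ^ 2 * ((z - 1) * z * (z + 1) * (z + 2) * (z + 3) * (z + 4) * (z + 5) * (z + 6))) / (E ^ 5 * (E ^ 2 + 1) ^ 2 * ((z - 5) * (z - 4) * (z - 3) * (z - 2) * (z - 1) * z * (z + 1) * (z + 2) * (z + 3) * (z + 4) * (z + 5) * (z + 6))) := by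
    rw [auxInv _ _ _ _ _ _ _ hc0 he0 hg3, div_eq_div_iff hDj0 hD]
    ring
  have t1 : (60 - 68 * z - z ^ 2 + 8 * z ^ 3 + z ^ 4) * ((z + 5) ^ 2 / ((z + 5) * (z + 4) * (z + 6) * (z + 3))) * (((E ^ 2 + 1) ^ 2 * (z + 5) ^ 2 - (6 * E ^ 2 + (3 * (z + 5) - 2) * E ^ 4 + 2 * (z + 5) * E ^ 2 - (z + 5))) / ((E ^ 2 + 1) ^ 2 * (z + 5) ^ 2) * (W * E ^ 5))
      = W * ((60 - 68 * z - z ^ 2 + 8 * z ^ 3 + z ^ 4) * ((E ^ 2 + 1) ^ 2 * (z + 5) ^ 2 - (6 * E ^ 2 + (3 * (z + 5) - 2) * E ^ 4 + 2 * (z + 5) * E ^ 2 - (z + 5))) * E ^ 10 * ((z - 5) * (z - 4) * (z - 3) * (z - 2) * (z - 1) * z * (z + 1) * (z + 2))) / (E ^ 5 * (E ^ 2 + 1) ^ 2 * ((z - 5) * (z - 4) * (z - 3) * (z - 2) * (z - 1) * z * (z + 1) * (z + 2) * (z + 3) * (z + 4) * (z + 5) * (z + 6))) := by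
    rw [auxMul _ _ _ _ _ _ _ hc1 he1, div_eq_div_iff hDj1 hD]
    ring
  have t2 : (-36 + 24 * z + 16 * z ^ 2 - 16 * z ^ 3 + 4 * z ^ 4) * ((z + -1) ^ 2 / ((z - 1) * (z - 2) * z * (z - 3))) * (((E ^ 2 + 1) ^ 2 * (z + -1) ^ 2 - (6 * E ^ 2 + (3 * (z + -1) - 2) * E ^ 4 + 2 * (z + -1) * E ^ 2 - (z + -1))) / ((E ^ 2 + 1) ^ 2 * (z + -1) ^ 2) * (W * E⁻¹))
      = W * ((-36 + 24 * z + 16 * z ^ 2 - 16 * z ^ 3 + 4 * z ^ 4) * ((E ^ 2 + 1) ^ 2 * (z + -1) ^ 2 - (6 * E ^ 2 + (3 * (z + -1) - 2) * E ^ 4 + 2 * (z + -1) * E ^ 2 - (z + -1))) * E ^ 4 * ((z - 5) * (z - 4) * (z + 1) * (z + 2) * (z + 3) * (z + 4) * (z + 5) * (z + 6))) / (E ^ 5 * (E ^ 2 + 1) ^ 2 * ((z - 5) * (z - 4) * (z - 3) * (z - 2) * (z - 1) * z * (z + 1) * (z + 2) * (z + 3) * (z + 4) * (z + 5) * (z +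 6))) := by
    rw [auxInv _ _ _ _ _ _ _ hc2 he2 hg1, div_eq_div_iff hDj2 hD]
    ring
  have t3 : (-44 - 88 * z - 8 * z ^ 2 + 16 * z ^ 3 + 4 * z ^ 4) * ((z + 3) ^ 2 / ((z + 3) * (z + 2) * (z + 4) * (z + 1))) * (((E ^ 2 + 1) ^ 2 * (z + 3) ^ 2 - (6 * E ^ 2 + (3 * (z + 3) - 2) * E ^ 4 + 2 * (z + 3) * E ^ 2 - (z + 3))) / ((E ^ 2 + 1) ^ 2 * (z + 3) ^ 2) * (W * E ^ 3))
      = W * ((-44 - 88 * z - 8 * z ^ 2 + 16 * z ^ 3 + 4 * z ^ 4) * ((E ^ 2 + 1) ^ 2 * (z + 3) ^ 2 - (6 * E ^ 2 + (3 * (z + 3) - 2) * E ^ 4 + 2 * (z + 3) * E ^ 2 - (z + 3))) * E ^ 8 * ((z - 5) * (z - 4) * (z - 3) * (z - 2) * (z - 1) * z * (z + 5) * (z + 6))) / (E ^ 5 * (E ^ 2 + 1) ^ 2 * ((z - 5) * (z - 4) * (z - 3) * (z - 2) * (z - 1) * z * (z + 1) * (z + 2) * (z + 3) * (z + 4) *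 (z + 5) * (z + 6))) := by
    rw [auxMul _ _ _ _ _ _ _ hc3 he3, div_eq_div_iff hDj3 hD]
    ring
  have t4 : (-12 - 16 * z - 2 * z ^ 2 + 6 * z ^ 4) * ((z + 1) ^ 2 / ((z + 1) * z * (z + 2) * (z - 1))) * (((E ^ 2 + 1) ^ 2 * (z + 1) ^ 2 - (6 * E ^ 2 + (3 * (z + 1) - 2) * E ^ 4 + 2 * (z + 1) * E ^ 2 - (z + 1))) / ((E ^ 2 + 1) ^ 2 * (z + 1) ^ 2) * (W * E))
      = W * ((-12 - 16 * z - 2 * z ^ 2 + 6 * z ^ 4) * ((E ^ 2 + 1) ^ 2 * (z + 1) ^ 2 - (6 * E ^ 2 + (3 * (z + 1) - 2) * E ^ 4 + 2 * (z + 1) * E ^ 2 - (z + 1))) * E ^ 6 * ((z - 5) * (z - 4) * (z - 3) * (z - 2) * (z + 3) * (z + 4) * (z + 5) * (z + 6))) / (E ^ 5 * (E ^ 2 + 1) ^ 2 * ((z - 5) * (z - 4) * (z - 3) * (z - 2) * (z - 1) * z * (z + 1) * (z + 2) * (z + 3) * (z + 4) * (z + 5) * (z + 6))) := by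
    rw [auxMul _ _ _ _ _ _ _ hc4 he4, div_eq_div_iff hDj4 hD]
    ring
  rw [t0, t1, t2, t3, t4, ← add_div, ← add_div, ← add_div, ← add_div]
  have heR : (E ^ 2 + 1) ^ 2 * z ^ 2 ≠ 0 := mul_ne_zero (pow_ne_zero _ hE21) (pow_ne_zero _ hz)
  rw [auxR _ _ _ _ _ heR hg3, inv_mul_eq_div, div_div,
    div_eq_div_iff (mul_ne_zero hD (pow_ne_zero 2 hz)) (mul_ne_zero heR hg3)]
  ring
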